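/- Let 𝒥 = (J_1,…,J_m) be a cover of I = {1,…,n} satisfying conditions (B1) and (B2), and for each k let W^{J_k} have the Gibbs block structure for J_k; assume condition (A1) with constant λ ∈ [0,1). Let 𝒲 = W^{J_m}·W^{J_{m−1}}⋯W^{J_1} (the Wasserstein matrix of one complete left-to-right sweep). For k = 2,…,m set a_k = W^{J_k}_{∂+J_{k−1}, ∂−J_k} and b_k = W^{J_k}_{∂+J_{k−1}, ∂+J_k}, and let β = max_{2≤k≤m} (λ·a_k + b_k). Then ‖𝒲‖_∞ ≤ 1 + λ and, for every integer k ≥ 1, ‖𝒲^k‖_∞ ≤ ‖𝒲‖_∞ · β^{k−1}. -/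
import Mathlib


open Finset

/-- The boundary `∂J` of a block `J ⊆ I`: indices outside `J` adjacent to `J`. -/
def bdry {n : ℕ} (J : Finset (Fin n)) : Finset (Fin n) :=
  Finset.univ.filter fun t => t ∉ J ∧ ∃ s ∈ J, ((s : ℕ) = (t : ℕ) + 1 ∨ (t : ℕ) = (s : ℕ) + 1)

/-- `W` has the Gibbs block structure for block `J`: entries in `[0,1]`, rows outside `J`
are identity rows, and rows in `J` vanish outside `∂J`. -/
def GibbsBlock {n : ℕ} (J : Finset (Fin n)) (W : Matrix (Fin n) (Fin n) ℝ) : Prop :=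
  (∀ i j, 0 ≤ W i j ∧ W i j ≤ 1) ∧
  (∀ i, i ∉ J → ∀ j, W i j = if i = j then 1 else 0) ∧
  (∀ i ∈ J, ∀ j, j ∉ bdry J → W i j = 0)

/-- Maximum absolute row sum norm `‖A‖_∞`. -/
noncomputable def rowNorm {n : ℕ} (A : Matrix (Fin n) (Fin n) ℝ) : ℝ :=
  ⨆ i, ∑ j, |A i j|

/-- The list `[m, m-1, …, 1]`. -/
def descList (m : ℕ) : List ℕ := (List.range m).map fun i => m - i

/-- A block is a (nonempty) integer interval. -/
def IsIntervalBlock {n : ℕ} (J : Finset (Fin n)) : Prop :=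
  J.Nonempty ∧ ∀ a ∈ J, ∀ b ∈ J, ∀ c : Fin n, a ≤ c → c ≤ b → c ∈ J

/-- Smallest index of a block (as a natural number). -/
noncomputable def blockMin {n : ℕ} (J : Finset (Fin n)) : ℕ :=
  sInf {t : ℕ | ∃ s ∈ J, (s : ℕ) = t}

/-- Largest index of a block (as a natural number). -/
def blockMax {n : ℕ} (J : Finset (Fin n)) : ℕ := J.sup fun t => (t : ℕ)

/-- Condition (B1): blocks are intervals, ordered by their min and max elements. -/
def CondB1 {n : ℕ} (m : ℕ) (J : ℕ → Finset (Fin n)) : Prop :=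
  (∀ k ∈ Finset.Icc 1 m, IsIntervalBlock (J k)) ∧
  ∀ j k, 1 ≤ j → j < k → k ≤ m →
    blockMin (J j) < blockMin (J k) ∧ blockMax (J j) < blockMax (J k)

/-- Condition (B2): non-consecutive blocks are separated. -/
def CondB2 {n : ℕ} (m : ℕ) (J : ℕ → Finset (Fin n)) : Prop :=
  ∀ j k, 1 ≤ j → j + 2 ≤ k → k ≤ m → blockMax (J j) + 1 < blockMin (J k)

/-- Matrix entry addressed with integer indices; out-of-range indices give `0`. -/
noncomputable def entryZ {n : ℕ} (A : Matrix (Fin n) (Fin n) ℝ) (i j : ℤ) : ℝ :=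
  if hi : 0 ≤ i ∧ i < (n : ℤ) then
    if hj : 0 ≤ j ∧ j < (n : ℤ) then A ⟨i.toNat, by omega⟩ ⟨j.toNat, by omega⟩ else 0
  else 0


open Matrix


lemma blockMin_le {n : ℕ} {J : Finset (Fin n)} {s : Fin n} (hs : s ∈ J) :
    blockMin J ≤ (s : ℕ) := Nat.sInf_le ⟨s, hs, rfl⟩

lemma exists_blockMin {n : ℕ} {J : Finset (Fin n)} (h : J.Nonempty) :
    ∃ s ∈ J, (s : ℕ) = blockMin J := by
  have : blockMin J ∈ {t : ℕ | ∃ s ∈ J, (s : ℕ) = t} := by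
    apply Nat.sInf_mem
    obtain ⟨s, hs⟩ := h
    exact ⟨s, s, hs, rfl⟩
  exact this

lemma le_blockMax {n : ℕ} {J : Finset (Fin n)} {s : Fin n} (hs : s ∈ J) :
    (s : ℕ) ≤ blockMax J := Finset.le_sup hs

lemma exists_blockMax {n : ℕ} {J : Finset (Fin n)} (h : J.Nonempty) :
    ∃ s ∈ J, (s : ℕ) = blockMax J := by
  obtain ⟨s, hs, h2⟩ := Finset.exists_mem_eq_sup J h (fun t => (t : ℕ))
  exact ⟨s, hs, h2.symm⟩

lemma blockMin_le_blockMax {n : ℕ} {J : Finset (Fin n)} (h : J.Nonempty) :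
    blockMin J ≤ blockMax J := by
  obtain ⟨s, hs, h2⟩ := exists_blockMin h
  exact h2 ▸ (blockMin_le hs).trans (le_blockMax hs)

lemma mem_of_interval {n : ℕ} {J : Finset (Fin n)} (hJ : IsIntervalBlock J) (t : Fin n)
    (h1 : blockMin J ≤ (t : ℕ)) (h2 : (t : ℕ) ≤ blockMax J) : t ∈ J := by
  obtain ⟨a, ha, ha2⟩ := exists_blockMin hJ.1
  obtain ⟨b, hb, hb2⟩ := exists_blockMax hJ.1
  exact hJ.2 a ha b hb t (by rw [Fin.le_def]; omega) (by rw [Fin.le_def]; omega)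

lemma mem_bdry {n : ℕ} {J : Finset (Fin n)} {t : Fin n} :
    t ∈ bdry J ↔ t ∉ J ∧ ∃ s ∈ J, ((s : ℕ) = (t : ℕ) + 1 ∨ (t : ℕ) = (s : ℕ) + 1) := by
  simp [bdry]

/-- Every boundary point of an interval block is the left or right boundary point. -/
lemma bdry_char {n : ℕ} {J : Finset (Fin n)} (hJ : IsIntervalBlock J) {t : Fin n}
    (ht : t ∈ bdry J) : ((t : ℕ) + 1 = blockMin J) ∨ ((t : ℕ) = blockMax J + 1) := by
  rw [mem_bdry] at ht
  obtain ⟨htJ, s, hs, hcase⟩ := ht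
  have hmins := blockMin_le hs
  have hmaxs := le_blockMax hs
  rcases hcase with h | h
  · left
    by_contra hne
    exact htJ (mem_of_interval hJ t (by omega) (by omega))
  · right
    by_contra hne
    exact htJ (mem_of_interval hJ t (by omega) (by omega))

lemma left_mem_bdry {n : ℕ} {J : Finset (Fin n)} (hJ : IsIntervalBlock J) {t : Fin n}
    (ht : (t : ℕ) + 1 = blockMin J) : t ∈ bdry J := by
  obtain ⟨s, hs, hs2⟩ := exists_blockMin hJ.1
  rw [mem_bdry]
  refine ⟨fun hmem => by have := blockMin_le hmem; omega, s, hs, Or.inl (by omega)⟩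

lemma right_mem_bdry {n : ℕ} {J : Finset (Fin n)} (hJ : IsIntervalBlock J) {t : Fin n}
    (ht : (t : ℕ) = blockMax J + 1) : t ∈ bdry J := by
  obtain ⟨s, hs, hs2⟩ := exists_blockMax hJ.1
  rw [mem_bdry]
  refine ⟨fun hmem => by have := le_blockMax hmem; omega, s, hs, Or.inr (by omega)⟩

/-- identity row: mulVec picks the entry -/
lemma mulVec_id_row {n : ℕ} {W : Matrix (Fin n) (Fin n) ℝ} {i : Fin n}
    (h : ∀ j, W i j = if i = j then 1 else 0) (x : Fin n → ℝ) : (W *ᵥ x) i = x i := by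
  simp [Matrix.mulVec, dotProduct, h, ite_mul, Finset.sum_ite_eq]

lemma mulVec_bdry_row {n : ℕ} {Jk : Finset (Fin n)} {W : Matrix (Fin n) (Fin n) ℝ} {i : Fin n}
    (hi : i ∈ Jk) (h0 : ∀ i ∈ Jk, ∀ j, j ∉ bdry Jk → W i j = 0) (x : Fin n → ℝ) :
    (W *ᵥ x) i = ∑ j ∈ bdry Jk, W i j * x j := by
  rw [Matrix.mulVec, dotProduct]
  exact (Finset.sum_subset (Finset.subset_univ _)
    (fun j _ hj => by rw [h0 i hi j hj, zero_mul])).symm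

/-- bound a sum over the boundary of an interval block by a bound for the left point
plus a bound for the right point. -/
lemma sum_bdry_le {n : ℕ} {J : Finset (Fin n)} (hJ : IsIntervalBlock J) (f : Fin n → ℝ)
    {cL cR : ℝ} (hcL : 0 ≤ cL) (hcR : 0 ≤ cR)
    (hfL : ∀ j : Fin n, (j : ℕ) + 1 = blockMin J → f j ≤ cL)
    (hfR : ∀ j : Fin n, (j : ℕ) = blockMax J + 1 → f j ≤ cR) :
    ∑ j ∈ bdry J, f j ≤ cL + cR := by
  classical
  set SL := (bdry J).filter (fun (j : Fin n) => (j : ℕ) + 1 = blockMin J) with hSL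
  set SR := (bdry J).filter (fun (j : Fin n) => (j : ℕ) = blockMax J + 1) with hSR
  have hunion : bdry J = SL ∪ SR := by
    ext t
    simp only [hSL, hSR, Finset.mem_union, Finset.mem_filter]
    constructor
    · intro ht
      rcases bdry_char hJ ht with h | h
      · exact Or.inl ⟨ht, h⟩
      · exact Or.inr ⟨ht, h⟩
    · rintro (⟨h, _⟩ | ⟨h, _⟩) <;> exact h
  have hminmax := blockMin_le_blockMax hJ.1
  have hdisj : Disjoint SL SR := by
    refine Finset.disjoint_left.mpr (fun j hj1 hj2 => ?_)
    rw [hSL, Finset.mem_filter] at hj1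
    rw [hSR, Finset.mem_filter] at hj2
    omega
  have hsub : ∀ (S : Finset (Fin n)) (c : ℝ), 0 ≤ c → (∀ j ∈ S, f j ≤ c) →
      (∀ j1 ∈ S, ∀ j2 ∈ S, j1 = j2) → ∑ j ∈ S, f j ≤ c := by
    intro S c hc hfc hsing
    rcases S.eq_empty_or_nonempty with rfl | ⟨x, hx⟩
    · simpa using hc
    · have : S = {x} := by
        ext y
        simp only [Finset.mem_singleton]
        exact ⟨fun hy => hsing y hy x hx, fun hy => hy ▸ hx⟩
      rw [this, Finset.sum_singleton]
      exact hfc x hx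
  rw [hunion, Finset.sum_union hdisj]
  gcongr
  · exact hsub SL cL hcL (fun j hj => hfL j (Finset.mem_filter.mp hj).2)
      (fun j1 h1 j2 h2 => by
        simp only [hSL, Finset.mem_filter] at h1 h2
        exact Fin.ext (by omega))
  · exact hsub SR cR hcR (fun j hj => hfR j (Finset.mem_filter.mp hj).2)
      (fun j1 h1 j2 h2 => by
        simp only [hSR, Finset.mem_filter] at h1 h2
        exact Fin.ext (by omega))

lemma mem_descList {m l : ℕ} (h : l ∈ descList m) : 1 ≤ l ∧ l ≤ m := by
  simp only [descList, List.mem_map, List.mem_range] at h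
  obtain ⟨i, hi, rfl⟩ := h
  omega

lemma descList_succ (m : ℕ) : descList (m + 1) = (m + 1) :: descList m := by
  simp only [descList, List.range_succ_eq_map, List.map_cons, List.map_map]
  congr 1
  simp [Function.comp]

lemma list_prod_nonneg {n : ℕ} (W : ℕ → Matrix (Fin n) (Fin n) ℝ) :
    ∀ (L : List ℕ), (∀ l ∈ L, ∀ i j, 0 ≤ W l i j) →
    ∀ i j, 0 ≤ (L.map W).prod i j := by
  intro L
  induction L with
  | nil => intro _ i j; simp [Matrix.one_apply]; positivity
  | cons h t ih =>
    intro hL i j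
    simp only [List.map_cons, List.prod_cons, Matrix.mul_apply]
    exact Finset.sum_nonneg fun l _ => mul_nonneg (hL h (by simp) i l)
      (ih (fun x hx => hL x (by simp [hx])) l j)

lemma mulVec_mono {n : ℕ} {A : Matrix (Fin n) (Fin n) ℝ} (hA : ∀ i j, 0 ≤ A i j)
    {x y : Fin n → ℝ} (h : ∀ j, x j ≤ y j) : ∀ i, (A *ᵥ x) i ≤ (A *ᵥ y) i := by
  intro i
  simp only [Matrix.mulVec, dotProduct]
  exact Finset.sum_le_sum fun j _ => mul_le_mul_of_nonneg_left (h j) (hA i j)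


lemma entryZ_nonneg {n : ℕ} {A : Matrix (Fin n) (Fin n) ℝ} (h : ∀ i j, 0 ≤ A i j)
    (x y : ℤ) : 0 ≤ entryZ A x y := by
  unfold entryZ
  split_ifs
  exacts [h _ _, le_refl 0, le_refl 0]

lemma entryZ_eq_of {n : ℕ} (A : Matrix (Fin n) (Fin n) ℝ) {x y : ℤ} {i j : Fin n}
    (hx : x = ((i : ℕ) : ℤ)) (hy : y = ((j : ℕ) : ℤ)) : entryZ A x y = A i j := by
  subst hx; subst hy
  have hi : (0:ℤ) ≤ ((i:ℕ):ℤ) ∧ ((i:ℕ):ℤ) < (n:ℤ) := ⟨Int.natCast_nonneg _, by exact_mod_cast i.isLt⟩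
  have hj : (0:ℤ) ≤ ((j:ℕ):ℤ) ∧ ((j:ℕ):ℤ) < (n:ℤ) := ⟨Int.natCast_nonneg _, by exact_mod_cast j.isLt⟩
  rw [entryZ, dif_pos hi, dif_pos hj]
  congr 1 <;> exact Fin.ext (by simp)

theorem stmt3 {n m : ℕ} (hn : 1 ≤ n) (hm : 1 ≤ m)
    (J : ℕ → Finset (Fin n)) (W : ℕ → Matrix (Fin n) (Fin n) ℝ)
    (hcover : ∀ i : Fin n, ∃ k ∈ Finset.Icc 1 m, i ∈ J k)
    (hB1 : CondB1 m J) (hB2 : CondB2 m J)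
    (hblock : ∀ k ∈ Finset.Icc 1 m, GibbsBlock (J k) (W k))
    (lam : ℝ) (hlam0 : 0 ≤ lam) (hlam1 : lam < 1)
    (hA1 : ∀ k ∈ Finset.Icc 1 m, ∀ i ∈ J k,
      i ∈ (Finset.Icc 1 m).biUnion (fun l => bdry (J l)) →
      ∑ j ∈ bdry (J k), W k i j ≤ lam)
    (a b : ℕ → ℝ)
    (ha : ∀ k, a k = entryZ (W k) ((blockMax (J (k - 1)) : ℤ) + 1) ((blockMin (J k) : ℤ) - 1))
    (hb : ∀ k, b k = entryZ (W k) ((blockMax (J (k - 1)) : ℤ) + 1) ((blockMax (J k) : ℤ) + 1))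
    (beta : ℝ)
    (hbeta : beta = sSup {x : ℝ | ∃ k ∈ Finset.Icc 2 m, x = lam * a k + b k}) :
    rowNorm (((descList m).map W).prod) ≤ 1 + lam ∧
    ∀ k : ℕ, 1 ≤ k →
      rowNorm ((((descList m).map W).prod) ^ k) ≤
        rowNorm (((descList m).map W).prod) * beta ^ (k - 1) := by
  classical
  haveI hne : Nonempty (Fin n) := ⟨⟨0, hn⟩⟩
  set bigB : Finset (Fin n) := (Finset.Icc 1 m).biUnion (fun l => bdry (J l)) with hbigB
  have hmem : ∀ k, 1 ≤ k → k ≤ m → k ∈ Finset.Icc 1 m := fun k h1 h2 => Finset.mem_Icc.mpr ⟨h1, h2⟩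
  have hW01 : ∀ k, 1 ≤ k → k ≤ m → ∀ i j, 0 ≤ W k i j ∧ W k i j ≤ 1 :=
    fun k h1 h2 => (hblock k (hmem k h1 h2)).1
  have hint : ∀ k, 1 ≤ k → k ≤ m → IsIntervalBlock (J k) :=
    fun k h1 h2 => hB1.1 k (hmem k h1 h2)
  have hBmem : ∀ k, 1 ≤ k → k ≤ m → ∀ j, j ∈ bdry (J k) → j ∈ bigB :=
    fun k h1 h2 j hj => Finset.mem_biUnion.mpr ⟨k, hmem k h1 h2, hj⟩
  -- structural facts
  have hmin1 : blockMin (J 1) = 0 := by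
    obtain ⟨p, hp, hip⟩ := hcover ⟨0, hn⟩
    rw [Finset.mem_Icc] at hp
    have h0 : blockMin (J p) = 0 := Nat.le_zero.mp (blockMin_le hip)
    have hp1 : p = 1 := by
      by_contra hne1
      have := (hB1.2 1 p le_rfl (by omega) hp.2).1
      omega
    rw [← hp1]; exact h0
  have hmaxm : blockMax (J m) + 1 = n := by
    obtain ⟨p, hp, hip⟩ := hcover ⟨n - 1, by omega⟩
    rw [Finset.mem_Icc] at hp
    have h1 : n - 1 ≤ blockMax (J p) := le_blockMax hip
    have h2 : blockMax (J m) < n := by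
      obtain ⟨s, hs, hs2⟩ := exists_blockMax (hint m hm le_rfl).1
      rw [← hs2]; exact s.isLt
    have hpm : p = m := by
      by_contra hne1
      have := (hB1.2 p m hp.1 (by omega) le_rfl).2
      omega
    subst hpm
    omega
  -- the left boundary point of block k (k ≥ 2) belongs to block k-1
  have hleft : ∀ k, 2 ≤ k → k ≤ m → ∀ j : Fin n, (j : ℕ) + 1 = blockMin (J k) →
      j ∈ J (k - 1) := by
    intro k hk2 hkm j hj
    obtain ⟨p, hp, hip⟩ := hcover j
    rw [Finset.mem_Icc] at hp
    have hple : blockMin (J p) ≤ (j : ℕ) := blockMin_le hip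
    have hpk : p = k - 1 := by
      rcases lt_trichotomy p (k-1) with h | h | h
      · exfalso
        have := hB2 p k hp.1 (by omega) hkm
        have := le_blockMax hip
        omega
      · exact h
      · exfalso
        rcases Nat.lt_or_ge p k with h2 | h2
        · omega
        · rcases Nat.eq_or_lt_of_le h2 with rfl | h3
          · omega
          · have := (hB1.2 k p (by omega) h3 hp.2).1
            omega
    rw [← hpk]; exact hip
  -- the right boundary point of block l is in no block other than l+1
  have hrightNot : ∀ l p, 1 ≤ l → l ≤ m → 1 ≤ p → p ≤ m → p ≠ l + 1 →
      ∀ j : Fin n, (j : ℕ) = blockMax (J l) + 1 → j ∉ J p := by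
    intro l p hl1 hlm hp1 hpm hpne j hj hmem'
    have h1 : (j : ℕ) ≤ blockMax (J p) := le_blockMax hmem'
    have h2 : blockMin (J p) ≤ (j : ℕ) := blockMin_le hmem'
    rcases Nat.lt_or_ge p (l+1) with h | h
    · have : p ≤ l := by omega
      rcases Nat.eq_or_lt_of_le this with rfl | h3
      · omega
      · have := (hB1.2 p l hp1 h3 hlm).2
        omega
    · have h4 : l + 2 ≤ p := by omega
      have := hB2 l p hl1 h4 hpm
      omega
  have hrightIn : ∀ l, 1 ≤ l → l ≤ m → ∀ j : Fin n, (j : ℕ) = blockMax (J l) + 1 →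
      j ∈ J (l + 1) ∧ l + 1 ≤ m := by
    intro l hl1 hlm j hj
    obtain ⟨p, hp, hip⟩ := hcover j
    rw [Finset.mem_Icc] at hp
    have hpe : p = l + 1 := by
      by_contra hne1
      exact hrightNot l p hl1 hlm hp.1 hp.2 hne1 j hj hip
    constructor
    · rw [← hpe]; exact hip
    · omega
  -- the sweep vector
  set v : ℕ → Fin n → ℝ := fun k => ((descList k).map W).prod *ᵥ (fun _ => 1) with hvdef
  have hv0 : ∀ i, v 0 i = 1 := by
    intro i
    simp only [hvdef, descList, List.range_zero, List.map_nil, List.prod_nil, Matrix.one_mulVec]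
  have hvsucc : ∀ k, v (k + 1) = W (k + 1) *ᵥ v k := by
    intro k
    simp only [hvdef, descList_succ, List.map_cons, List.prod_cons, Matrix.mulVec_mulVec]
  -- main invariant
  have inv : ∀ k, k ≤ m → ∀ i : Fin n,
      (0 ≤ v k i ∧ v k i ≤ 1 + lam) ∧
      ((∀ l, 1 ≤ l → l ≤ k → i ∉ J l) → v k i = 1) ∧
      (i ∈ bigB → (∃ l, 1 ≤ l ∧ l ≤ k ∧ i ∈ J l) → v k i ≤ lam) ∧
      (∀ l, 1 ≤ l → l + 1 ≤ k → (i : ℕ) = blockMax (J l) + 1 →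
        v k i ≤ lam * a (l + 1) + b (l + 1)) := by
    intro k
    induction k with
    | zero =>
      intro _ i
      exact ⟨⟨by rw [hv0]; norm_num, by rw [hv0]; linarith⟩,
        fun _ => hv0 i,
        fun _ h => absurd h (by rintro ⟨l, h1, h2, _⟩; omega),
        fun l h1 h2 _ => absurd h2 (by omega)⟩
    | succ k ih =>
      intro hk i
      have hk' : k ≤ m := by omega
      have ihk := ih hk'
      have hk1m : 1 ≤ k + 1 := by omega
      have hintk := hint (k+1) hk1m hk
      have hWk := hW01 (k+1) hk1m hk
      by_cases hiJ : i ∈ J (k+1)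
      · have hrow : v (k+1) i = ∑ j ∈ bdry (J (k+1)), W (k+1) i j * v k j := by
          rw [hvsucc k]
          exact mulVec_bdry_row hiJ (hblock (k+1) (hmem _ hk1m hk)).2.2 _
        have hL : ∀ j : Fin n, (j : ℕ) + 1 = blockMin (J (k+1)) → 0 ≤ v k j ∧ v k j ≤ lam := by
          intro j hj
          have hk2 : 2 ≤ k + 1 := by
            by_contra h
            have hk0 : k = 0 := by omega
            rw [hk0] at hj
            rw [hmin1] at hj
            omega
          have hjk : j ∈ J k := by
            have := hleft (k+1) hk2 hk j hj
            simpa using this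
          have hjB : j ∈ bigB :=
            hBmem (k+1) hk1m hk j (left_mem_bdry hintk hj)
          exact ⟨(ihk j).1.1, (ihk j).2.2.1 hjB ⟨k, by omega, le_rfl, hjk⟩⟩
        have hR : ∀ j : Fin n, (j : ℕ) = blockMax (J (k+1)) + 1 → v k j = 1 := by
          intro j hj
          apply (ihk j).2.1
          intro l hl1 hlk
          exact hrightNot (k+1) l hk1m hk hl1 (by omega) (by omega) j hj
        have hbd : ∀ j ∈ bdry (J (k+1)), 0 ≤ v k j ∧ v k j ≤ 1 := by
          intro j hj
          rcases bdry_char hintk hj with h | h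
          · exact ⟨(hL j h).1, le_trans (hL j h).2 (le_of_lt hlam1)⟩
          · rw [hR j h]; norm_num
        refine ⟨⟨?_, ?_⟩, ?_, ?_, ?_⟩
        · rw [hrow]
          exact Finset.sum_nonneg fun j hj => mul_nonneg (hWk i j).1 (hbd j hj).1
        · rw [hrow]
          have := sum_bdry_le hintk (fun j => W (k+1) i j * v k j) hlam0 zero_le_one
            (fun j hj => by
              calc W (k+1) i j * v k j ≤ 1 * lam :=
                mul_le_mul (hWk i j).2 (hL j hj).2 (hL j hj).1 zero_le_one
              _ = lam := one_mul lam)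
            (fun j hj => by show W (k+1) i j * v k j ≤ 1; rw [hR j hj, mul_one]; exact (hWk i j).2)
          linarith
        · intro h; exact absurd hiJ (h (k+1) hk1m le_rfl)
        · intro hiB _
          rw [hrow]
          calc ∑ j ∈ bdry (J (k+1)), W (k+1) i j * v k j
              ≤ ∑ j ∈ bdry (J (k+1)), W (k+1) i j := by
                apply Finset.sum_le_sum
                intro j hj
                calc W (k+1) i j * v k j ≤ W (k+1) i j * 1 :=
                  mul_le_mul_of_nonneg_left (hbd j hj).2 (hWk i j).1
                _ = W (k+1) i j := mul_one _
            _ ≤ lam := hA1 (k+1) (hmem _ hk1m hk) i hiJ hiB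
        · intro l hl1 hlk1 hij
          rcases Nat.eq_or_lt_of_le hlk1 with heq | hlt
          · have hlk : l = k := by omega
            subst hlk
            rw [hrow]
            have hA0 : ∀ p q, 0 ≤ W (l+1) p q := fun p q => (hWk p q).1
            have ha2 : 0 ≤ a (l+1) := by rw [ha]; exact entryZ_nonneg hA0 _ _
            have hb2 : 0 ≤ b (l+1) := by rw [hb]; exact entryZ_nonneg hA0 _ _
            apply sum_bdry_le hintk (fun j => W (l+1) i j * v l j)
              (mul_nonneg hlam0 ha2) hb2
            · intro j hj
              show W (l+1) i j * v l j ≤ lam * a (l+1)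
              have hWa : W (l+1) i j = a (l+1) := by
                rw [ha (l+1)]
                refine (entryZ_eq_of _ ?_ ?_).symm
                · simp only [Nat.add_sub_cancel]
                  rw [hij]; push_cast; ring
                · rw [← hj]; push_cast; ring
              rw [hWa, mul_comm lam (a (l+1))]
              exact mul_le_mul_of_nonneg_left (hL j hj).2 ha2
            · intro j hj
              show W (l+1) i j * v l j ≤ b (l+1)
              have hWb : W (l+1) i j = b (l+1) := by
                rw [hb (l+1)]
                refine (entryZ_eq_of _ ?_ ?_).symm
                · simp only [Nat.add_sub_cancel]
                  rw [hij]; push_cast; ring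
                · rw [hj]; push_cast; ring
              rw [hR j hj, mul_one, hWb]
          · exact absurd hiJ
              (hrightNot l (k+1) hl1 (by omega) hk1m hk (by omega) i hij)
      · have hveq : v (k+1) i = v k i := by
          rw [hvsucc k]
          exact mulVec_id_row ((hblock (k+1) (hmem _ hk1m hk)).2.1 i hiJ) _
        refine ⟨by rw [hveq]; exact (ihk i).1, ?_, ?_, ?_⟩
        · intro h
          rw [hveq]
          exact (ihk i).2.1 (fun l h1 h2 => h l h1 (by omega))
        · rintro hiB ⟨l, h1, h2, h3⟩
          rw [hveq]
          have hlne : l ≠ k + 1 := fun h => hiJ (h ▸ h3)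
          exact (ihk i).2.2.1 hiB ⟨l, h1, by omega, h3⟩
        · intro l h1 h2 hij
          rw [hveq]
          have hlne : l + 1 ≠ k + 1 := by
            intro h
            exact hiJ (h ▸ (hrightIn l h1 (by omega) i hij).1)
          exact (ihk i).2.2.2 l h1 (by omega) hij
  -- ## Part 2 setup
  set P := ((descList m).map W).prod with hPdef
  have hPnn : ∀ i j, 0 ≤ P i j := by
    rw [hPdef]
    exact list_prod_nonneg W (descList m)
      (fun l hl i j => (hW01 l (mem_descList hl).1 (mem_descList hl).2 i j).1)
  set r : Fin n → ℝ := v m with hrdef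
  have hrP : P *ᵥ (fun _ => 1) = r := rfl
  have hrnn : ∀ j, 0 ≤ r j := fun j => (inv m le_rfl j).1.1
  have hrow1 : ∀ i, ∑ j, |P i j| = r i := by
    intro i
    rw [← hrP]
    simp only [Matrix.mulVec, dotProduct, mul_one]
    exact Finset.sum_congr rfl (fun j _ => abs_of_nonneg (hPnn i j))
  have hbddP : BddAbove (Set.range fun i => ∑ j, |P i j|) := (Set.finite_range _).bddAbove
  have part1 : rowNorm P ≤ 1 + lam := by
    apply ciSup_le
    intro i
    rw [hrow1 i]
    exact (inv m le_rfl i).1.2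
  have hSset : {x : ℝ | ∃ k ∈ Finset.Icc 2 m, x = lam * a k + b k}
      = (fun k => lam * a k + b k) '' ↑(Finset.Icc 2 m) := by
    ext x
    simp only [Set.mem_setOf_eq, Set.mem_image, Finset.mem_coe]
    constructor
    · rintro ⟨k, hk, rfl⟩; exact ⟨k, hk, rfl⟩
    · rintro ⟨k, hk, rfl⟩; exact ⟨k, hk, rfl⟩
  have hSbdd : BddAbove {x : ℝ | ∃ k ∈ Finset.Icc 2 m, x = lam * a k + b k} := by
    rw [hSset]; exact ((Finset.Icc 2 m).finite_toSet.image _).bddAbove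
  have hble : ∀ k, 2 ≤ k → k ≤ m → lam * a k + b k ≤ beta := by
    intro k h2 hkm
    rw [hbeta]
    exact le_csSup hSbdd ⟨k, Finset.mem_Icc.mpr ⟨h2, hkm⟩, rfl⟩
  have habnn : ∀ k, 1 ≤ k → k ≤ m → 0 ≤ lam * a k + b k := by
    intro k h1 hkm
    have hA0 : ∀ p q, 0 ≤ W k p q := fun p q => (hW01 k h1 hkm p q).1
    have ha0 : 0 ≤ a k := by rw [ha]; exact entryZ_nonneg hA0 _ _
    have hb0 : 0 ≤ b k := by rw [hb]; exact entryZ_nonneg hA0 _ _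
    exact add_nonneg (mul_nonneg hlam0 ha0) hb0
  have hbeta0 : 0 ≤ beta := by
    rcases Nat.lt_or_ge m 2 with h | h
    · rw [hbeta]
      have hempty : {x : ℝ | ∃ k ∈ Finset.Icc 2 m, x = lam * a k + b k} = ∅ := by
        apply Set.eq_empty_iff_forall_notMem.mpr
        rintro x ⟨k, hk, _⟩
        rw [Finset.mem_Icc] at hk
        omega
      rw [hempty, Real.sSup_empty]
    · exact le_trans (habnn 2 (by omega) h) (hble 2 le_rfl h)
  have hrb : ∀ l, 1 ≤ l → l ≤ m → ∀ j : Fin n, (j : ℕ) = blockMax (J l) + 1 → r j ≤ beta := by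
    intro l h1 hlm j hj
    have h2 := (hrightIn l h1 hlm j hj).2
    exact le_trans ((inv m le_rfl j).2.2.2 l h1 h2 hj) (hble (l+1) (by omega) h2)
  set w : ℕ → Fin n → ℝ := fun k => ((descList k).map W).prod *ᵥ r with hwdef
  have hw0 : ∀ i, w 0 i = r i := by
    intro i
    simp only [hwdef, descList, List.range_zero, List.map_nil, List.prod_nil, Matrix.one_mulVec]
  have hwsucc : ∀ k, w (k + 1) = W (k + 1) *ᵥ w k := by
    intro k
    simp only [hwdef, descList_succ, List.map_cons, List.prod_cons, Matrix.mulVec_mulVec]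
  have inv2 : ∀ k, k ≤ m → ∀ i : Fin n,
      0 ≤ w k i ∧
      ((∀ l, 1 ≤ l → l ≤ k → i ∉ J l) → w k i = r i) ∧
      ((∃ l, 1 ≤ l ∧ l ≤ k ∧ i ∈ J l) → w k i ≤ beta * v k i) := by
    intro k
    induction k with
    | zero =>
      intro _ i
      exact ⟨by rw [hw0]; exact hrnn i, fun _ => hw0 i,
        fun h => absurd h (by rintro ⟨l, h1, h2, _⟩; omega)⟩
    | succ k ih =>
      intro hk i
      have hk' : k ≤ m := by omega
      have ihk := ih hk'
      have hk1m : 1 ≤ k + 1 := by omega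
      have hintk := hint (k+1) hk1m hk
      have hWk := hW01 (k+1) hk1m hk
      by_cases hiJ : i ∈ J (k+1)
      · have hroww : w (k+1) i = ∑ j ∈ bdry (J (k+1)), W (k+1) i j * w k j := by
          rw [hwsucc k]; exact mulVec_bdry_row hiJ (hblock (k+1) (hmem _ hk1m hk)).2.2 _
        have hrowv : v (k+1) i = ∑ j ∈ bdry (J (k+1)), W (k+1) i j * v k j := by
          rw [hvsucc k]; exact mulVec_bdry_row hiJ (hblock (k+1) (hmem _ hk1m hk)).2.2 _
        have hterm : ∀ j ∈ bdry (J (k+1)), w k j ≤ beta * v k j := by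
          intro j hj
          rcases bdry_char hintk hj with h | h
          · have hk2 : 2 ≤ k + 1 := by
              by_contra hcon
              have hk0 : k = 0 := by omega
              rw [hk0] at h
              rw [hmin1] at h
              omega
            have hjk : j ∈ J k := by
              have := hleft (k+1) hk2 hk j h
              simpa using this
            exact (ihk j).2.2 ⟨k, by omega, le_rfl, hjk⟩
          · have huntouched : ∀ l, 1 ≤ l → l ≤ k → j ∉ J l := by
              intro l hl1 hlk
              exact hrightNot (k+1) l hk1m hk hl1 (by omega) (by omega) j h
            have hwv : w k j = r j := (ihk j).2.1 huntouched
            have hv1 : v k j = 1 := (inv k hk' j).2.1 huntouched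
            rw [hwv, hv1, mul_one]
            exact hrb (k+1) hk1m hk j h
        have hwnn : ∀ j ∈ bdry (J (k+1)), 0 ≤ w k j := fun j _ => (ihk j).1
        refine ⟨?_, ?_, ?_⟩
        · rw [hroww]
          exact Finset.sum_nonneg fun j hj => mul_nonneg (hWk i j).1 (hwnn j hj)
        · intro h; exact absurd hiJ (h (k+1) hk1m le_rfl)
        · intro _
          rw [hroww, hrowv, Finset.mul_sum]
          apply Finset.sum_le_sum
          intro j hj
          rw [← mul_assoc, mul_comm beta (W (k+1) i j), mul_assoc]
          exact mul_le_mul_of_nonneg_left (hterm j hj) (hWk i j).1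
      · have hweq : w (k+1) i = w k i := by
          rw [hwsucc k]; exact mulVec_id_row ((hblock (k+1) (hmem _ hk1m hk)).2.1 i hiJ) _
        have hveq : v (k+1) i = v k i := by
          rw [hvsucc k]; exact mulVec_id_row ((hblock (k+1) (hmem _ hk1m hk)).2.1 i hiJ) _
        refine ⟨by rw [hweq]; exact (ihk i).1, ?_, ?_⟩
        · intro h; rw [hweq]; exact (ihk i).2.1 (fun l h1 h2 => h l h1 (by omega))
        · rintro ⟨l, h1, h2, h3⟩
          rw [hweq, hveq]
          have hlne : l ≠ k + 1 := fun h => hiJ (h ▸ h3)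
          exact (ihk i).2.2 ⟨l, h1, by omega, h3⟩
  have hPr : ∀ i, (P *ᵥ r) i ≤ beta * r i := by
    intro i
    obtain ⟨l, hl, hil⟩ := hcover i
    rw [Finset.mem_Icc] at hl
    have h1 : (P *ᵥ r) i = w m i := rfl
    rw [h1]
    exact (inv2 m le_rfl i).2.2 ⟨l, hl.1, hl.2, hil⟩
  have hPpow : ∀ s : ℕ, ∀ i j, 0 ≤ (P ^ s) i j := by
    intro s
    induction s with
    | zero =>
      intro i j
      rw [pow_zero, Matrix.one_apply]
      split_ifs <;> norm_num
    | succ s ih =>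
      intro i j
      rw [pow_succ, Matrix.mul_apply]
      exact Finset.sum_nonneg fun l _ => mul_nonneg (ih i l) (hPnn l j)
  have hkey : ∀ s : ℕ, ∀ i, ((P ^ s) *ᵥ r) i ≤ beta ^ s * r i := by
    intro s
    induction s with
    | zero => intro i; simp [pow_zero, Matrix.one_mulVec]
    | succ s ih =>
      intro i
      have h1 : (P ^ (s+1)) *ᵥ r = (P ^ s) *ᵥ (P *ᵥ r) := by
        conv_rhs => rw [Matrix.mulVec_mulVec]
        rw [← pow_succ]
      rw [h1]
      calc ((P ^ s) *ᵥ (P *ᵥ r)) i ≤ ((P ^ s) *ᵥ (fun j => beta * r j)) i :=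
            mulVec_mono (hPpow s) (fun j => hPr j) i
        _ = beta * (((P ^ s) *ᵥ r) i) := by
            simp only [Matrix.mulVec, dotProduct, Finset.mul_sum]
            exact Finset.sum_congr rfl fun j _ => by ring
        _ ≤ beta * (beta ^ s * r i) := mul_le_mul_of_nonneg_left (ih i) hbeta0
        _ = beta ^ (s+1) * r i := by ring
  refine ⟨part1, ?_⟩
  intro k hk1
  have hrle : ∀ i, r i ≤ rowNorm P := by
    intro i
    rw [← hrow1 i]
    exact le_ciSup hbddP i
  have hPk : ∀ i, ∑ j, |(P ^ k) i j| = ((P ^ (k - 1)) *ᵥ r) i := by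
    intro i
    have e1 : ∑ j, |(P ^ k) i j| = ((P ^ k) *ᵥ (fun _ => 1)) i := by
      simp only [Matrix.mulVec, dotProduct, mul_one]
      exact Finset.sum_congr rfl fun j _ => abs_of_nonneg (hPpow k i j)
    rw [e1]
    have e2 : P ^ k = P ^ (k - 1) * P := by
      conv_lhs => rw [show k = (k - 1) + 1 by omega]
      rw [pow_succ]
    rw [e2, ← Matrix.mulVec_mulVec, hrP]
  apply ciSup_le
  intro i
  rw [hPk i]
  calc ((P ^ (k - 1)) *ᵥ r) i ≤ beta ^ (k - 1) * r i := hkey (k - 1) i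
    _ ≤ beta ^ (k - 1) * rowNorm P :=
        mul_le_mul_of_nonneg_left (hrle i) (pow_nonneg hbeta0 _)
    _ = rowNorm P * beta ^ (k - 1) := mul_comm _ _
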